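/- Let A ∈ ℝ^{m×n}, b ∈ ℝᵐ, τ > 0, ν > 0 and w ∈ ℝⁿ. (i) If there exists y ∈ ℝᵐ with (A Aᵀ) y = A w + b and ‖y‖₂ ≤ ν τ, then w − Aᵀ y is a global minimizer of u ↦ (1/(2ν))‖u − w‖₂² + τ‖A u + b‖₂ over ℝⁿ. (ii) If α* > 0 satisfies ‖(A Aᵀ + α* I)⁻¹ (A w + b)‖₂ = ν τ, then w − Aᵀ (A Aᵀ + α* I)⁻¹ (A w + b) is the unique global minimizer of u ↦ (1/(2ν))‖u − w‖₂² + τ‖A u + b‖₂ over ℝⁿ. -/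

import Mathlib

open Matrix

/-- The Euclidean (`ℓ₂`) norm of a vector in `Fin k → ℝ`. -/
noncomputable def norm2 {k : ℕ} (v : Fin k → ℝ) : ℝ := Real.sqrt (∑ i, v i ^ 2)

/-- Proximal objective `u ↦ (1/(2ν))‖u − w‖₂² + τ‖Au + b‖₂`. -/
noncomputable def proxObj {m n : ℕ} (A : Matrix (Fin m) (Fin n) ℝ) (b : Fin m → ℝ)
    (τ ν : ℝ) (w : Fin n → ℝ) (u : Fin n → ℝ) : ℝ :=
  1 / (2 * ν) * norm2 (u - w) ^ 2 + τ * norm2 (A.mulVec u + b)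

/-! The minimizer is certified by a dual vector `y`: if `u* = w - Aᵀy`, `‖y‖₂ ≤ ντ` and
`⟪Au* + b, y⟫ = ντ‖Au* + b‖₂` (so that `y / ν` is a subgradient of `τ‖·‖₂` at `Au* + b`), then
expanding `‖u - w‖₂²` around `u*` and bounding `⟪Au + b, y⟫` by Cauchy–Schwarz gives
`F(u*) + ‖u - u*‖₂² / (2ν) ≤ F(u)` for every `u`. In case (i) the residual `Au* + b` vanishes;
in case (ii) it equals `α* y` with `‖y‖₂ = ντ`. -/

section norm2

variable {k : ℕ}

theorem norm2_eq_norm_toLp (v : Fin k → ℝ) : norm2 v = ‖WithLp.toLp 2 v‖ := by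
  simp [norm2, EuclideanSpace.norm_eq]

theorem norm2_nonneg (v : Fin k → ℝ) : 0 ≤ norm2 v := Real.sqrt_nonneg _

theorem norm2_zero : norm2 (0 : Fin k → ℝ) = 0 := by
  simp [norm2_eq_norm_toLp]

theorem norm2_pos {v : Fin k → ℝ} : 0 < norm2 v ↔ v ≠ 0 := by
  simp [norm2_eq_norm_toLp]

theorem norm2_neg (v : Fin k → ℝ) : norm2 (-v) = norm2 v := by
  simp [norm2_eq_norm_toLp]

theorem norm2_smul (c : ℝ) (v : Fin k → ℝ) : norm2 (c • v) = |c| * norm2 v := by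
  simpa [norm2_eq_norm_toLp] using norm_smul c (WithLp.toLp 2 v)

theorem dotProduct_self_eq_norm2_sq (v : Fin k → ℝ) : v ⬝ᵥ v = norm2 v ^ 2 := by
  rw [norm2_eq_norm_toLp, ← real_inner_self_eq_norm_sq, EuclideanSpace.inner_toLp_toLp,
    star_trivial]

theorem dotProduct_le_norm2_mul_norm2 (x y : Fin k → ℝ) : x ⬝ᵥ y ≤ norm2 x * norm2 y := by
  simpa [norm2_eq_norm_toLp, EuclideanSpace.inner_toLp_toLp, dotProduct_comm] using
    real_inner_le_norm (WithLp.toLp 2 x) (WithLp.toLp 2 y)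

theorem norm2_sub_sq (x y : Fin k → ℝ) :
    norm2 (x - y) ^ 2 = norm2 x ^ 2 - 2 * (x ⬝ᵥ y) + norm2 y ^ 2 := by
  simpa [norm2_eq_norm_toLp, EuclideanSpace.inner_toLp_toLp, dotProduct_comm] using
    norm_sub_sq_real (WithLp.toLp 2 x) (WithLp.toLp 2 y)

end norm2

section dualCertificate

variable {m n : ℕ} {A : Matrix (Fin m) (Fin n) ℝ} {b : Fin m → ℝ} {w : Fin n → ℝ}
  {y : Fin m → ℝ} {τ ν : ℝ}

theorem mulVec_sub_transpose_mulVec_add :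
    A *ᵥ (w - Aᵀ *ᵥ y) + b = A *ᵥ w + b - (A * Aᵀ) *ᵥ y := by
  rw [mulVec_sub, mulVec_mulVec, sub_add_eq_add_sub]

theorem mulVec_sub_transpose_mulVec_add_eq_smul {α : ℝ}
    (hy : (A * Aᵀ + α • (1 : Matrix (Fin m) (Fin m) ℝ)) *ᵥ y = A *ᵥ w + b) :
    A *ᵥ (w - Aᵀ *ᵥ y) + b = α • y := by
  rw [mulVec_sub_transpose_mulVec_add, ← hy, add_mulVec, smul_mulVec, one_mulVec,
    add_sub_cancel_left]

theorem proxObj_add_le_of_dualCertificate (hν : 0 < ν) (hy : norm2 y ≤ ν * τ)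
    (hdual : (A *ᵥ (w - Aᵀ *ᵥ y) + b) ⬝ᵥ y = ν * τ * norm2 (A *ᵥ (w - Aᵀ *ᵥ y) + b))
    (u : Fin n → ℝ) :
    proxObj A b τ ν w (w - Aᵀ *ᵥ y) + 1 / (2 * ν) * norm2 (u - (w - Aᵀ *ᵥ y)) ^ 2
      ≤ proxObj A b τ ν w u := by
  set z := Aᵀ *ᵥ y
  set d := u - (w - z)
  have hsplit : norm2 (u - w) ^ 2 = norm2 d ^ 2 - 2 * (d ⬝ᵥ z) + norm2 z ^ 2 := by
    rw [← norm2_sub_sq, sub_sub, sub_add_cancel]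
  have hcross : d ⬝ᵥ z = (A *ᵥ u + b) ⬝ᵥ y - ν * τ * norm2 (A *ᵥ (w - z) + b) := by
    have hAd : A *ᵥ d = (A *ᵥ u + b) - (A *ᵥ (w - z) + b) := by
      rw [add_sub_add_right_eq_sub]; simp only [d, mulVec_sub]
    rw [dotProduct_mulVec, vecMul_transpose, hAd, sub_dotProduct, hdual]
  have hcs : (A *ᵥ u + b) ⬝ᵥ y ≤ ν * τ * norm2 (A *ᵥ u + b) :=
    (dotProduct_le_norm2_mul_norm2 _ _).trans <| by
      rw [mul_comm (ν * τ)]; exact mul_le_mul_of_nonneg_left hy (norm2_nonneg _)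
  have hcenter : norm2 (w - z - w) = norm2 z := by rw [sub_sub_cancel_left, norm2_neg]
  unfold proxObj
  rw [hcenter, hsplit, hcross]
  field_simp
  linarith

theorem proxObj_le_of_dualCertificate (hν : 0 < ν) (hy : norm2 y ≤ ν * τ)
    (hdual : (A *ᵥ (w - Aᵀ *ᵥ y) + b) ⬝ᵥ y = ν * τ * norm2 (A *ᵥ (w - Aᵀ *ᵥ y) + b))
    (u : Fin n → ℝ) :
    proxObj A b τ ν w (w - Aᵀ *ᵥ y) ≤ proxObj A b τ ν w u := by
  have hle := proxObj_add_le_of_dualCertificate hν hy hdual u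
  have : 0 ≤ 1 / (2 * ν) * norm2 (u - (w - Aᵀ *ᵥ y)) ^ 2 := by positivity
  linarith

theorem proxObj_lt_of_dualCertificate (hν : 0 < ν) (hy : norm2 y ≤ ν * τ)
    (hdual : (A *ᵥ (w - Aᵀ *ᵥ y) + b) ⬝ᵥ y = ν * τ * norm2 (A *ᵥ (w - Aᵀ *ᵥ y) + b))
    {u : Fin n → ℝ} (hu : u ≠ w - Aᵀ *ᵥ y) :
    proxObj A b τ ν w (w - Aᵀ *ᵥ y) < proxObj A b τ ν w u := by
  have hle := proxObj_add_le_of_dualCertificate hν hy hdual u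
  have : 0 < 1 / (2 * ν) * norm2 (u - (w - Aᵀ *ᵥ y)) ^ 2 := by
    have := norm2_pos.2 (sub_ne_zero.2 hu)
    positivity
  linarith

end dualCertificate

theorem posDef_mul_transpose_add_smul_one {m n : ℕ} (A : Matrix (Fin m) (Fin n) ℝ) {α : ℝ}
    (hα : 0 < α) : (A * Aᵀ + α • (1 : Matrix (Fin m) (Fin m) ℝ)).PosDef := by
  refine PosDef.posSemidef_add ?_ (PosDef.one.smul hα)
  simpa using posSemidef_self_mul_conjTranspose A

theorem stmt_16_general {m n : ℕ} (A : Matrix (Fin m) (Fin n) ℝ) (b : Fin m → ℝ)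
    (τ ν : ℝ) (hν : 0 < ν) (w : Fin n → ℝ) :
    (∀ y : Fin m → ℝ, (A * Aᵀ).mulVec y = A.mulVec w + b → norm2 y ≤ ν * τ →
      ∀ u : Fin n → ℝ, proxObj A b τ ν w (w - Aᵀ.mulVec y) ≤ proxObj A b τ ν w u) ∧
    (∀ αstar : ℝ, 0 < αstar →
      norm2 ((A * Aᵀ + αstar • (1 : Matrix (Fin m) (Fin m) ℝ))⁻¹.mulVec (A.mulVec w + b))
        = ν * τ →
      ∀ u : Fin n → ℝ,
        u ≠ w - Aᵀ.mulVec ((A * Aᵀ + αstar • (1 : Matrix (Fin m) (Fin m) ℝ))⁻¹.mulVec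
              (A.mulVec w + b)) →
        proxObj A b τ ν w (w - Aᵀ.mulVec ((A * Aᵀ + αstar •
              (1 : Matrix (Fin m) (Fin m) ℝ))⁻¹.mulVec (A.mulVec w + b)))
          < proxObj A b τ ν w u) := by
  constructor
  · intro y hy hnorm u
    refine proxObj_le_of_dualCertificate hν hnorm ?_ u
    rw [mulVec_sub_transpose_mulVec_add, hy, sub_self, zero_dotProduct, norm2_zero, mul_zero]
  · intro α hα hnorm u hu
    have hdet := (posDef_mul_transpose_add_smul_one A hα).det_pos.ne'.isUnit
    refine proxObj_lt_of_dualCertificate hν hnorm.le ?_ hu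
    rw [mulVec_sub_transpose_mulVec_add_eq_smul
        (by rw [mulVec_mulVec, mul_nonsing_inv _ hdet, one_mulVec]),
      smul_dotProduct, dotProduct_self_eq_norm2_sq, norm2_smul, abs_of_pos hα, hnorm]
    ring

/-- **Corollary `cor:prox` (proximal operator of `u ↦ τ‖Au + b‖₂`).**
(i) If `(AAᵀ)y = Aw + b` with `‖y‖₂ ≤ ντ`, then `w − Aᵀy` is a global minimizer of
`u ↦ (1/(2ν))‖u − w‖₂² + τ‖Au + b‖₂`.
(ii) If `α* > 0` with `‖(AAᵀ + α*I)⁻¹(Aw + b)‖₂ = ντ`, then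
`w − Aᵀ(AAᵀ + α*I)⁻¹(Aw + b)` is its unique global minimizer. -/
theorem stmt_16 {m n : ℕ} (A : Matrix (Fin m) (Fin n) ℝ) (b : Fin m → ℝ)
    (τ ν : ℝ) (hτ : 0 < τ) (hν : 0 < ν) (w : Fin n → ℝ) :
    (∀ y : Fin m → ℝ, (A * Aᵀ).mulVec y = A.mulVec w + b → norm2 y ≤ ν * τ →
      ∀ u : Fin n → ℝ, proxObj A b τ ν w (w - Aᵀ.mulVec y) ≤ proxObj A b τ ν w u) ∧
    (∀ αstar : ℝ, 0 < αstar →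
      norm2 ((A * Aᵀ + αstar • (1 : Matrix (Fin m) (Fin m) ℝ))⁻¹.mulVec (A.mulVec w + b))
        = ν * τ →
      ∀ u : Fin n → ℝ,
        u ≠ w - Aᵀ.mulVec ((A * Aᵀ + αstar • (1 : Matrix (Fin m) (Fin m) ℝ))⁻¹.mulVec
              (A.mulVec w + b)) →
        proxObj A b τ ν w (w - Aᵀ.mulVec ((A * Aᵀ + αstar •
              (1 : Matrix (Fin m) (Fin m) ℝ))⁻¹.mulVec (A.mulVec w + b)))
          < proxObj A b τ ν w u) :=
  stmt_16_general A b τ ν hν w
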